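/- Let 1 < q < ∞ and β > 1. Suppose a measurable function f : D → ℂ can be written f = Σ_n λ_n a_n pointwise almost everywhere on D, where (λ_n) ∈ ℓ¹ and each a_n is a T^{1,q}(γ) β-atom. Then for every α > 1 there exist a sequence (μ_n) ∈ ℓ¹ and T^{1,q}(γ) α-atoms b_n such that f = Σ_n μ_n b_n almost everywhere on D, with Σ_n |μ_n| ≤ C Σ_n |λ_n| for a constant C depending only on α, β, q and the dimension n. -/

import Mathlib

open MeasureTheory Metric Set
open scoped ENNReal

noncomputable section

/-- Euclidean space ℝⁿ. -/
abbrev E (n : ℕ) := EuclideanSpace ℝ (Fin n)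

/-- The standard Gaussian measure on ℝⁿ. -/
def gaussianM (n : ℕ) : Measure (E n) :=
  volume.withDensity
    (fun x => ENNReal.ofReal ((2 * Real.pi) ^ (-(n : ℝ) / 2) * Real.exp (-‖x‖ ^ 2 / 2)))

/-- m(x) = min {1, 1/|x|} (with value 1 at x = 0). -/
def mFun {n : ℕ} (x : E n) : ℝ := if ‖x‖ ≤ 1 then 1 else ‖x‖⁻¹

/-- The measure `dt/t` on `(0,∞)`. -/
def tMeasure : Measure ℝ :=
  (volume.restrict (Set.Ioi (0 : ℝ))).withDensity fun t => ENNReal.ofReal t⁻¹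

/-- The admissible region `D = {(x,t) : 0 < t < m(x)}`. -/
def Dset (n : ℕ) : Set (E n × ℝ) := {p | 0 < p.2 ∧ p.2 < mFun p.1}

/-- The measure `dγ(y) dt/t` on `D`. -/
def DMeasure (n : ℕ) : Measure (E n × ℝ) := ((gaussianM n).prod tMeasure).restrict (Dset n)

/-- The tent with aperture `α` over `A`: `{(y,t) : t > 0, d(y, ∁A) ≥ α t}`. -/
def tentSet (n : ℕ) (α : ℝ) (A : Set (E n)) : Set (E n × ℝ) :=
  {p | 0 < p.2 ∧ α * p.2 ≤ infDist p.1 Aᶜ}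

/-- A `T^{1,q}(γ)` `α`-atom: a measurable function supported in `T_1(B) ∩ D` for some
ball `B ∈ 𝓑_α`, with `‖a‖_{L^q(D, dγ dt/t)} ≤ γ(B)^{-1/q'}` where `1/q' = 1 - 1/q`. -/
def IsTAtom (n : ℕ) (q α : ℝ) (a : E n × ℝ → ℂ) : Prop :=
  Measurable a ∧
  ∃ (c : E n) (r : ℝ), 0 ≤ r ∧ r ≤ α * mFun c ∧
    (∀ p, p ∉ tentSet n 1 (ball c r) ∩ Dset n → a p = 0) ∧
    (∫⁻ p, (‖a p‖₊ : ℝ≥0∞) ^ q ∂(DMeasure n)) ^ (1 / q) ≤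
      gaussianM n (ball c r) ^ (-(1 - 1 / q))

/-!
A `β`-atom on `B(c, r)` with `r ≤ α m(c)` already is an `α`-atom. Otherwise cover `B(c, r)` by a
fixed number `N` of balls `B(yᵢ, s)` with `s ≍ (α - 1) m(c)`, restrict the atom to a disjoint
refinement of the cover and divide by a constant. Since `m` is `1`-Lipschitz, the points of `D`
above `B(yᵢ, s)` lie in the tent over the admissible ball `B(yᵢ, α m(yᵢ))`; since the Gaussian
density varies by a bounded factor on admissible balls, `γ` is doubling on them and
`γ(B(yᵢ, α m(yᵢ))) ≤ D γ(B(c, r))`. So every `β`-atom is a combination of `N` `α`-atoms with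
coefficients of total size at most `N D^{1/q'}`, each piece dominated by the atom. Enumerating
`ℕ × Fin N` by `ℕ` gives the new decomposition; domination makes the double series absolutely
convergent, so it may be rearranged.
-/

lemma mFun_eq_inv_max {n : ℕ} (x : E n) : mFun x = (max 1 ‖x‖)⁻¹ := by
  unfold mFun
  split_ifs with h
  · rw [max_eq_left h, inv_one]
  · rw [max_eq_right (not_le.mp h).le]

lemma mFun_pos {n : ℕ} (x : E n) : 0 < mFun x := by
  rw [mFun_eq_inv_max]; positivity

lemma mFun_le_one {n : ℕ} (x : E n) : mFun x ≤ 1 := by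
  rw [mFun_eq_inv_max]; exact inv_le_one_of_one_le₀ (le_max_left _ _)

lemma norm_mul_mFun_le_one {n : ℕ} (x : E n) : ‖x‖ * mFun x ≤ 1 := by
  rw [mFun_eq_inv_max, mul_inv_le_iff₀ (by positivity), one_mul]
  exact le_max_right _ _

lemma mFun_le_one_add_dist_mul {n : ℕ} (x y : E n) : mFun x ≤ (1 + dist x y) * mFun y := by
  rw [mFun_eq_inv_max, mFun_eq_inv_max, ← div_eq_mul_inv,
    inv_le_comm₀ (by positivity) (by positivity), inv_div, div_le_iff₀ (by positivity)]
  have hd := dist_nonneg (x := x) (y := y)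
  have hy : ‖y‖ ≤ ‖x‖ + dist x y := norm_le_norm_add_const_of_dist_le (dist_comm y x).le
  have h1 : (1 : ℝ) ≤ max 1 ‖x‖ := le_max_left _ _
  have h2 : ‖x‖ ≤ max 1 ‖x‖ := le_max_right _ _
  exact max_le (by nlinarith) (by nlinarith)

lemma mFun_le_add_dist {n : ℕ} (x y : E n) : mFun x ≤ mFun y + dist x y := by
  have := mFun_le_one_add_dist_mul x y
  nlinarith [mFun_le_one y, dist_nonneg (x := x) (y := y)]

lemma abs_norm_sq_sub_norm_sq_le {n : ℕ} {κ : ℝ} (hκ : 0 ≤ κ) {x c : E n}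
    (h : dist x c ≤ κ * mFun c) : |‖x‖ ^ 2 - ‖c‖ ^ 2| ≤ κ * (κ + 2) := by
  have hm := mFun_pos c
  have hm1 := mFun_le_one c
  have hcm := norm_mul_mFun_le_one c
  have hxc : |‖x‖ - ‖c‖| ≤ κ * mFun c := (abs_norm_sub_norm_le x c).trans (dist_eq_norm x c ▸ h)
  have hsum : ‖x‖ + ‖c‖ ≤ 2 * ‖c‖ + κ * mFun c := by linarith [(abs_le.mp hxc).2]
  calc |‖x‖ ^ 2 - ‖c‖ ^ 2| = |‖x‖ - ‖c‖| * (‖x‖ + ‖c‖) := by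
        rw [sq_sub_sq, abs_mul, abs_of_nonneg (by positivity : 0 ≤ ‖x‖ + ‖c‖), mul_comm]
    _ ≤ κ * mFun c * (2 * ‖c‖ + κ * mFun c) := by gcongr
    _ = 2 * κ * (‖c‖ * mFun c) + κ ^ 2 * mFun c ^ 2 := by ring
    _ ≤ 2 * κ * 1 + κ ^ 2 * 1 := by gcongr; nlinarith
    _ = κ * (κ + 2) := by ring

def gaussianDensity (n : ℕ) (x : E n) : ℝ :=
  (2 * Real.pi) ^ (-(n : ℝ) / 2) * Real.exp (-‖x‖ ^ 2 / 2)

lemma gaussianM_eq_withDensity (n : ℕ) :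
    gaussianM n = volume.withDensity fun x => ENNReal.ofReal (gaussianDensity n x) := rfl

lemma gaussianDensity_pos {n : ℕ} (x : E n) : 0 < gaussianDensity n x := by
  unfold gaussianDensity; positivity

lemma continuous_gaussianDensity (n : ℕ) : Continuous (gaussianDensity n) := by
  unfold gaussianDensity; fun_prop

lemma gaussianDensity_eq_mul_exp {n : ℕ} (x c : E n) :
    gaussianDensity n x = gaussianDensity n c * Real.exp ((‖c‖ ^ 2 - ‖x‖ ^ 2) / 2) := by
  unfold gaussianDensity
  rw [mul_assoc, ← Real.exp_add]
  ring_nf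

lemma gaussianDensity_le_exp_mul {n : ℕ} {κ : ℝ} (hκ : 0 ≤ κ) {x c : E n}
    (h : dist x c ≤ κ * mFun c) :
    gaussianDensity n x ≤ Real.exp (κ * (κ + 2) / 2) * gaussianDensity n c := by
  rw [gaussianDensity_eq_mul_exp x c, mul_comm (Real.exp _)]
  refine mul_le_mul_of_nonneg_left (Real.exp_le_exp.2 ?_) (gaussianDensity_pos c).le
  linarith [(abs_le.mp (abs_norm_sq_sub_norm_sq_le hκ h)).1]

lemma exp_neg_mul_gaussianDensity_le {n : ℕ} {κ : ℝ} (hκ : 0 ≤ κ) {x c : E n}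
    (h : dist x c ≤ κ * mFun c) :
    Real.exp (-(κ * (κ + 2) / 2)) * gaussianDensity n c ≤ gaussianDensity n x := by
  rw [gaussianDensity_eq_mul_exp x c, mul_comm (Real.exp _)]
  refine mul_le_mul_of_nonneg_left (Real.exp_le_exp.2 ?_) (gaussianDensity_pos c).le
  linarith [(abs_le.mp (abs_norm_sq_sub_norm_sq_le hκ h)).2]

lemma gaussianM_le_ofReal_mul_volume {n : ℕ} {s : Set (E n)} (hs : MeasurableSet s) {M : ℝ}
    (h : ∀ x ∈ s, gaussianDensity n x ≤ M) : gaussianM n s ≤ ENNReal.ofReal M * volume s := by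
  rw [gaussianM_eq_withDensity, withDensity_apply _ hs, ← setLIntegral_const]
  exact setLIntegral_mono measurable_const fun x hx => ENNReal.ofReal_le_ofReal (h x hx)

lemma ofReal_mul_volume_le_gaussianM {n : ℕ} {s : Set (E n)} (hs : MeasurableSet s) {M : ℝ}
    (h : ∀ x ∈ s, M ≤ gaussianDensity n x) : ENNReal.ofReal M * volume s ≤ gaussianM n s := by
  rw [gaussianM_eq_withDensity, withDensity_apply _ hs, ← setLIntegral_const]
  exact setLIntegral_mono (continuous_gaussianDensity n).measurable.ennreal_ofReal
    fun x hx => ENNReal.ofReal_le_ofReal (h x hx)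

lemma volume_ball_eq_ofReal_div_pow_mul {n : ℕ} (c : E n) {ρ R : ℝ} (hρ : 0 < ρ) (hR : 0 < R) :
    volume (ball c R) = ENNReal.ofReal ((R / ρ) ^ n) * volume (ball c ρ) := by
  conv_lhs => rw [← div_mul_cancel₀ R hρ.ne']
  rw [Measure.addHaar_ball_mul_of_pos _ _ (div_pos hR hρ), finrank_euclideanSpace_fin,
    Measure.addHaar_ball_center volume c ρ]

lemma gaussianM_ball_le_of_le_mFun {n : ℕ} {κ ρ R : ℝ} (hκ : 0 ≤ κ) (hρ : 0 < ρ) (hρR : ρ ≤ R)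
    {c : E n} (hR : R ≤ κ * mFun c) :
    gaussianM n (ball c R) ≤
      ENNReal.ofReal (Real.exp (κ * (κ + 2)) * (R / ρ) ^ n) * gaussianM n (ball c ρ) := by
  set K := κ * (κ + 2) / 2
  have hupper : gaussianM n (ball c R) ≤
      ENNReal.ofReal (Real.exp K * gaussianDensity n c) * volume (ball c R) :=
    gaussianM_le_ofReal_mul_volume measurableSet_ball fun x hx =>
      gaussianDensity_le_exp_mul hκ ((mem_ball.1 hx).le.trans hR)
  have hlower : ENNReal.ofReal (Real.exp (-K) * gaussianDensity n c) * volume (ball c ρ) ≤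
      gaussianM n (ball c ρ) :=
    ofReal_mul_volume_le_gaussianM measurableSet_ball fun x hx =>
      exp_neg_mul_gaussianDensity_le hκ ((mem_ball.1 hx).le.trans (hρR.trans hR))
  have hexp : Real.exp (κ * (κ + 2)) * Real.exp (-K) = Real.exp K := by
    rw [← Real.exp_add]; congr 1; ring
  have hg := gaussianDensity_pos c
  have hR0 := hρ.trans_le hρR
  calc gaussianM n (ball c R)
      ≤ ENNReal.ofReal (Real.exp K * gaussianDensity n c) * volume (ball c R) := hupper
    _ = ENNReal.ofReal (Real.exp (κ * (κ + 2)) * (R / ρ) ^ n) *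
          (ENNReal.ofReal (Real.exp (-K) * gaussianDensity n c) * volume (ball c ρ)) := by
      rw [volume_ball_eq_ofReal_div_pow_mul c hρ hR0, ← mul_assoc, ← mul_assoc,
        ← ENNReal.ofReal_mul (by positivity), ← ENNReal.ofReal_mul (by positivity)]
      congr 2
      linear_combination (-(R / ρ) ^ n * gaussianDensity n c) * hexp
    _ ≤ _ := by gcongr

lemma fst_mem_of_mem_tentSet {n : ℕ} {α : ℝ} (hα : 0 < α) {A : Set (E n)} {p : E n × ℝ}
    (hp : p ∈ tentSet n α A) : p.1 ∈ A := by
  by_contra h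
  have h' := hp.2
  rw [infDist_zero_of_mem (mem_compl h)] at h'
  nlinarith [hp.1]

lemma nonempty_compl_ball {n : ℕ} (hn : 1 ≤ n) (y : E n) (r : ℝ) : (ball y r)ᶜ.Nonempty := by
  have : Nontrivial (E n) :=
    Module.nontrivial_of_finrank_pos (R := ℝ) (by rw [finrank_euclideanSpace_fin]; omega)
  exact nonempty_compl.2 fun h => NormedSpace.unbounded_univ ℝ (E n) (h ▸ isBounded_ball)

lemma mem_tentSet_ball_of_mem_Dset {n : ℕ} (hn : 1 ≤ n) {α s : ℝ} {y : E n} {p : E n × ℝ}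
    (hp : p ∈ Dset n) (hpy : dist p.1 y < s) (hs : 2 * s ≤ (α - 1) * mFun y) :
    p ∈ tentSet n 1 (ball y (α * mFun y)) := by
  refine ⟨hp.1, ?_⟩
  rw [one_mul, le_infDist (nonempty_compl_ball hn _ _)]
  intro z hz
  have hzy : α * mFun y ≤ dist z y := not_lt.1 hz
  linarith [hp.2, dist_triangle z p.1 y, dist_comm z p.1, mFun_le_add_dist p.1 y]

lemma exists_scaled_cover_closedBall {F : Type*} [NormedAddCommGroup F] [NormedSpace ℝ F]
    [ProperSpace F] {K : ℝ} (hK : 0 ≤ K) :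
    ∃ N, 0 < N ∧ ∃ z : Fin N → F, (∀ i, ‖z i‖ ≤ K) ∧
      ∀ (c : F) {s : ℝ}, 0 < s → closedBall c (K * s) ⊆ ⋃ i, ball (c + s • z i) s := by
  obtain ⟨t, htK, ht, hcover⟩ :=
    finite_cover_balls_of_compact (isCompact_closedBall (0 : F) K) one_pos
  obtain ⟨N, z, rfl⟩ := ht.fin_embedding
  simp only [mem_range, iUnion_exists, iUnion_iUnion_eq'] at hcover
  refine ⟨N, ?_, z, fun i => ?_, fun c s hs x hx => ?_⟩
  · obtain ⟨i, -⟩ := mem_iUnion.1 (hcover (mem_closedBall_self hK))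
    exact i.pos
  · simpa using htK (mem_range_self i)
  · have hw : s⁻¹ • (x - c) ∈ closedBall (0 : F) K := by
      rw [mem_closedBall_zero_iff, norm_smul, Real.norm_of_nonneg (inv_nonneg.2 hs.le),
        inv_mul_le_iff₀ hs, mul_comm]
      rwa [mem_closedBall, dist_eq_norm] at hx
    obtain ⟨i, hi⟩ := mem_iUnion.1 (hcover hw)
    refine mem_iUnion.2 ⟨i, ?_⟩
    rw [mem_ball, dist_eq_norm] at hi ⊢
    have hxy : x - (c + s • z i) = s • (s⁻¹ • (x - c) - z i) := by
      rw [smul_sub, smul_inv_smul₀ hs.ne']; abel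
    rw [hxy, norm_smul, Real.norm_of_nonneg hs.le]
    exact mul_lt_of_lt_one_right hs hi

lemma mFun_le_one_add_mul_of_dist_le {n : ℕ} {β : ℝ} {x y : E n} (h : dist x y ≤ β) :
    mFun x ≤ (1 + β) * mFun y :=
  (mFun_le_one_add_dist_mul x y).trans
    (mul_le_mul_of_nonneg_right (by linarith) (mFun_pos y).le)

lemma gaussianM_ball_le_of_dist_le {n : ℕ} {α β : ℝ} (hα : 0 < α) (hβ : 0 ≤ β) {y c : E n}
    (h : dist y c ≤ β * mFun c) :
    gaussianM n (ball y (α * mFun y)) ≤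
      ENNReal.ofReal (Real.exp ((β + α * (1 + β)) * (β + α * (1 + β) + 2)) *
        ((β + α * (1 + β)) / α) ^ n) * gaussianM n (ball c (α * mFun c)) := by
  have hmc := mFun_pos c
  have hmy : mFun y ≤ (1 + β) * mFun c :=
    mFun_le_one_add_mul_of_dist_le (h.trans (by nlinarith [mFun_le_one c]))
  have hsub : ball y (α * mFun y) ⊆ ball c ((β + α * (1 + β)) * mFun c) :=
    ball_subset_ball' (by nlinarith)
  have hdbl := gaussianM_ball_le_of_le_mFun (n := n) (c := c) (κ := β + α * (1 + β))
    (ρ := α * mFun c) (by positivity) (by positivity) (by gcongr; nlinarith) le_rfl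
  rw [mul_div_mul_right _ _ hmc.ne'] at hdbl
  exact (measure_mono hsub).trans hdbl

def IsBallAtom (n : ℕ) (q : ℝ) (c : E n) (r : ℝ) (a : E n × ℝ → ℂ) : Prop :=
  Measurable a ∧ (∀ p, p ∉ tentSet n 1 (ball c r) ∩ Dset n → a p = 0) ∧
    eLpNorm' a q (DMeasure n) ≤ gaussianM n (ball c r) ^ (-(1 - 1 / q))

lemma isTAtom_iff {n : ℕ} {q α : ℝ} {a : E n × ℝ → ℂ} :
    IsTAtom n q α a ↔ ∃ c r, 0 ≤ r ∧ r ≤ α * mFun c ∧ IsBallAtom n q c r a :=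
  ⟨fun ⟨hm, c, r, h0, hr, hs, hn⟩ => ⟨c, r, h0, hr, hm, hs, hn⟩,
    fun ⟨c, r, h0, hr, hm, hs, hn⟩ => ⟨hm, c, r, h0, hr, hs, hn⟩⟩

lemma isTAtom_zero (n : ℕ) {q α : ℝ} (hq : 0 < q) (hα : 0 ≤ α) : IsTAtom n q α 0 := by
  refine isTAtom_iff.2 ⟨0, 0, le_rfl, by have := mFun_pos (0 : E n); positivity,
    measurable_const, fun _ _ => rfl, ?_⟩
  rw [eLpNorm'_zero hq]
  exact zero_le

lemma inv_rpow_mul_rpow_neg_le {x y K : ℝ≥0∞} {θ : ℝ} (hθ : 0 ≤ θ) (hK0 : K ≠ 0) (hK : K ≠ ⊤)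
    (h : x ≤ K * y) : (K ^ θ)⁻¹ * y ^ (-θ) ≤ x ^ (-θ) := by
  rw [ENNReal.rpow_neg, ENNReal.rpow_neg,
    ← ENNReal.mul_inv (Or.inl (ENNReal.rpow_pos (pos_iff_ne_zero.2 hK0) hK).ne')
      (Or.inl (ENNReal.rpow_ne_top_of_nonneg hθ hK)),
    ENNReal.inv_le_inv, ← ENNReal.mul_rpow_of_nonneg _ _ hθ]
  exact ENNReal.rpow_le_rpow h hθ

lemma isBallAtom_smul_indicator {n : ℕ} (hn : 1 ≤ n) {q α s : ℝ} (hq : 0 < q)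
    {a : E n × ℝ → ℂ} (ha : Measurable a) (haD : ∀ p, p ∉ Dset n → a p = 0)
    {A : Set (E n)} (hA : MeasurableSet A) {y : E n} (hAy : A ⊆ ball y s)
    (hs : 2 * s ≤ (α - 1) * mFun y) {w : ℂ}
    (hw : ‖w‖ₑ * eLpNorm' a q (DMeasure n) ≤
      gaussianM n (ball y (α * mFun y)) ^ (-(1 - 1 / q))) :
    IsBallAtom n q y (α * mFun y) (w • (Prod.fst ⁻¹' A).indicator a) := by
  refine ⟨(ha.indicator (measurable_fst hA)).const_smul w, fun p hp => ?_, ?_⟩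
  · by_cases hpA : p.1 ∈ A
    · have hpD : p ∉ Dset n := fun hpD =>
        hp ⟨mem_tentSet_ball_of_mem_Dset hn hpD (hAy hpA) hs, hpD⟩
      simp [indicator_of_mem (show p ∈ Prod.fst ⁻¹' A from hpA), haD p hpD]
    · simp [indicator_of_notMem (show p ∉ Prod.fst ⁻¹' A from hpA)]
  · calc eLpNorm' (w • (Prod.fst ⁻¹' A).indicator a) q (DMeasure n)
        ≤ ‖w‖ₑ * eLpNorm' ((Prod.fst ⁻¹' A).indicator a) q (DMeasure n) :=
          eLpNorm'_const_smul_le hq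
      _ ≤ ‖w‖ₑ * eLpNorm' a q (DMeasure n) := by
          gcongr
          exact eLpNorm'_mono_ae hq.le (ae_of_all _ fun p => norm_indicator_le_norm_self _ _)
      _ ≤ _ := hw

def IsDominatedSum {X ι 𝕜 : Type*} [Fintype ι] [SeminormedRing 𝕜] (w : ι → 𝕜)
    (b : ι → X → 𝕜) (a : X → 𝕜) : Prop :=
  (∀ x, ∑ i, w i * b i x = a x) ∧ ∀ i x, ‖w i * b i x‖ ≤ ‖a x‖

lemma isDominatedSum_single {X ι 𝕜 : Type*} [Fintype ι] [DecidableEq ι] [SeminormedRing 𝕜]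
    [NormOneClass 𝕜] (i₀ : ι) (a : X → 𝕜) :
    IsDominatedSum (Pi.single i₀ 1) (Pi.single i₀ a) a := by
  refine ⟨fun x => ?_, fun i x => ?_⟩
  · simp [Pi.single_apply]
  · by_cases h : i = i₀ <;> simp [h]

open Function in
lemma sum_indicator_eq_of_support_subset {X ι M : Type*} [Fintype ι] [AddCommMonoid M]
    {A : ι → Set X} (hA : Pairwise (Disjoint on A)) {f : X → M}
    (hf : support f ⊆ ⋃ i, A i) (x : X) : ∑ i, (A i).indicator f x = f x := by
  rw [← Finset.indicator_biUnion_apply _ _ (hA.set_pairwise _)]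
  simp only [Finset.mem_univ, iUnion_true]
  rw [indicator_eq_self.2 hf]

/-- The pieces are the restrictions of `a` above a disjoint refinement of the cover, divided by
`D ^ (1 - 1 / q)`. -/
lemma exists_isTAtom_dominatedSum_of_cover {n : ℕ} (hn : 1 ≤ n) {q α : ℝ} (hq : 1 ≤ q)
    (hα : 0 ≤ α) {a : E n × ℝ → ℂ} {c : E n} {r : ℝ} (ha : IsBallAtom n q c r a) {N : ℕ}
    {y : Fin N → E n} {s : ℝ} (hcover : ball c r ⊆ ⋃ i, ball (y i) s)
    (hs : ∀ i, 2 * s ≤ (α - 1) * mFun (y i)) {D : ℝ} (hD : 0 < D)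
    (hγ : ∀ i, gaussianM n (ball (y i) (α * mFun (y i))) ≤
      ENNReal.ofReal D * gaussianM n (ball c r)) :
    ∃ (w : Fin N → ℂ) (b : Fin N → E n × ℝ → ℂ), (∀ i, IsTAtom n q α (b i)) ∧
      IsDominatedSum w b a ∧ ∑ i, ‖w i‖ = N * D ^ (1 - 1 / q) := by
  obtain ⟨ha_meas, ha_supp, ha_norm⟩ := ha
  have hθ : 0 ≤ 1 - 1 / q := by
    rw [sub_nonneg]; exact div_le_one_of_le₀ hq (by linarith)
  set t : ℝ := D ^ (1 - 1 / q)
  have ht : 0 < t := Real.rpow_pos_of_pos hD _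
  set A := disjointed fun i => ball (y i) s
  have hA : ∀ i, MeasurableSet (A i) := fun i => by
    simp only [A, disjointed_eq_inter_compl]
    exact measurableSet_ball.inter
      (MeasurableSet.biInter (to_countable _) fun j _ => measurableSet_ball.compl)
  have hw : ∀ i, ‖(t : ℂ)⁻¹‖ₑ * eLpNorm' a q (DMeasure n) ≤
      gaussianM n (ball (y i) (α * mFun (y i))) ^ (-(1 - 1 / q)) := fun i => by
    have hnorm : ‖(t : ℂ)⁻¹‖ₑ = (ENNReal.ofReal D ^ (1 - 1 / q))⁻¹ := by
      rw [enorm_inv (by exact_mod_cast ht.ne'), ← ofReal_norm, Complex.norm_real,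
        Real.norm_of_nonneg ht.le, ENNReal.ofReal_rpow_of_pos hD]
    rw [hnorm]
    refine (mul_le_mul_right ha_norm _).trans (inv_rpow_mul_rpow_neg_le hθ
      (ENNReal.ofReal_pos.2 hD).ne' ENNReal.ofReal_ne_top (hγ i))
  refine ⟨fun _ => t, fun i => (t : ℂ)⁻¹ • (Prod.fst ⁻¹' A i).indicator a, fun i => ?_,
    ⟨fun p => ?_, fun i p => ?_⟩, ?_⟩
  · have hD_supp : ∀ p, p ∉ Dset n → a p = 0 := fun p hp => ha_supp p fun h => hp h.2
    exact isTAtom_iff.2 ⟨y i, α * mFun (y i), mul_nonneg hα (mFun_pos _).le, le_rfl,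
      isBallAtom_smul_indicator hn (by linarith) ha_meas hD_supp (hA i)
        (disjointed_subset _ i) (hs i) (hw i)⟩
  · have hsupp : Function.support a ⊆ ⋃ i, Prod.fst ⁻¹' A i := fun p hp => by
      have hpB := fst_mem_of_mem_tentSet one_pos (not_imp_comm.1 (ha_supp p) hp).1
      rw [← preimage_iUnion, iUnion_disjointed]
      exact hcover hpB
    simp only [Pi.smul_apply, smul_eq_mul, ← mul_assoc,
      mul_inv_cancel₀ (show (t : ℂ) ≠ 0 by exact_mod_cast ht.ne'), one_mul]
    exact sum_indicator_eq_of_support_subset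
      (fun i j hij => (disjoint_disjointed _ hij).preimage _) hsupp p
  · simp only [Pi.smul_apply, smul_eq_mul, ← mul_assoc,
      mul_inv_cancel₀ (show (t : ℂ) ≠ 0 by exact_mod_cast ht.ne'), one_mul]
    exact norm_indicator_le_norm_self _ _
  · simp [Complex.norm_real, abs_of_pos ht]

lemma exists_isTAtom_dominatedSum_single {n N : ℕ} (hN : 0 < N) {q α : ℝ} (hq : 0 < q)
    (hα : 0 ≤ α) {a : E n × ℝ → ℂ} (ha : IsTAtom n q α a) :
    ∃ (w : Fin N → ℂ) (b : Fin N → E n × ℝ → ℂ), (∀ i, IsTAtom n q α (b i)) ∧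
      IsDominatedSum w b a ∧ ∑ i, ‖w i‖ = 1 := by
  classical
  set i₀ : Fin N := ⟨0, hN⟩
  refine ⟨Pi.single i₀ 1, Pi.single i₀ a, fun i => ?_, isDominatedSum_single i₀ a,
    by simp [Pi.single_apply, apply_ite]⟩
  by_cases h : i = i₀
  · simpa [h] using ha
  · simpa [h] using isTAtom_zero n hq hα

lemma exists_isTAtom_dominatedSum {n : ℕ} (hn : 1 ≤ n) {q α β : ℝ} (hq : 1 ≤ q) (hα : 1 < α)
    (hβ : 0 ≤ β) : ∃ N, 0 < N ∧ ∃ C : ℝ, 0 < C ∧ ∀ a, IsTAtom n q β a →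
      ∃ (w : Fin N → ℂ) (b : Fin N → E n × ℝ → ℂ), (∀ i, IsTAtom n q α (b i)) ∧
        IsDominatedSum w b a ∧ ∑ i, ‖w i‖ ≤ C := by
  have hα1 : 0 < α - 1 := by linarith
  obtain ⟨N, hN, z, hz, hcover⟩ := exists_scaled_cover_closedBall (F := E n)
    (K := 2 * β * (1 + β) / (α - 1)) (by positivity)
  set κ := β + α * (1 + β)
  set D := Real.exp (κ * (κ + 2)) * (κ / α) ^ n
  have hD : 1 ≤ D := one_le_mul_of_one_le_of_one_le (Real.one_le_exp (by positivity))
    (one_le_pow₀ ((one_le_div (by linarith)).2 (by nlinarith)))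
  have hC : 1 ≤ N * D ^ (1 - 1 / q) := one_le_mul_of_one_le_of_one_le (Nat.one_le_cast.2 hN)
    (Real.one_le_rpow hD (sub_nonneg.2 (div_le_one_of_le₀ hq (by linarith))))
  refine ⟨N, hN, N * D ^ (1 - 1 / q), by linarith, fun a ha => ?_⟩
  obtain ⟨c, r, hr0, hrβ, ha⟩ := isTAtom_iff.1 ha
  rcases le_or_gt r (α * mFun c) with hr | hr
  · obtain ⟨w, b, hb, hwb, hw⟩ := exists_isTAtom_dominatedSum_single hN (by linarith)
      (by linarith) (isTAtom_iff.2 ⟨c, r, hr0, hr, ha⟩)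
    exact ⟨w, b, hb, hwb, hw.trans_le hC⟩
  · have hmc := mFun_pos c
    set s := (α - 1) * mFun c / (2 * (1 + β))
    have hs : 0 < s := by positivity
    have hKs : 2 * β * (1 + β) / (α - 1) * s = β * mFun c := by
      simp only [s]; field_simp
    have hyc : ∀ i, dist (c + s • z i) c ≤ β * mFun c := fun i => by
      rw [dist_self_add_left, norm_smul, Real.norm_of_nonneg hs.le, ← hKs, mul_comm]
      exact mul_le_mul_of_nonneg_right (hz i) hs.le
    have hsy : ∀ i, 2 * s ≤ (α - 1) * mFun (c + s • z i) := fun i => by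
      have hcy : dist c (c + s • z i) ≤ β := by
        rw [dist_comm]; exact (hyc i).trans (mul_le_of_le_one_right hβ (mFun_le_one c))
      have h2s : 2 * s * (1 + β) = (α - 1) * mFun c := by
        simp only [s]; field_simp
      nlinarith [mFun_le_one_add_mul_of_dist_le hcy]
    have hball : ball c r ⊆ ⋃ i, ball (c + s • z i) s := by
      refine (ball_subset_closedBall.trans (closedBall_subset_closedBall hrβ)).trans ?_
      rw [← hKs]
      exact hcover c hs
    have hγ : ∀ i, gaussianM n (ball (c + s • z i) (α * mFun (c + s • z i))) ≤
        ENNReal.ofReal D * gaussianM n (ball c r) := fun i =>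
      (gaussianM_ball_le_of_dist_le (by linarith) hβ (hyc i)).trans (by gcongr)
    obtain ⟨w, b, hb, hwb, hw⟩ := exists_isTAtom_dominatedSum_of_cover hn hq (by linarith) ha
      hball hsy (zero_lt_one.trans_le hD) hγ
    exact ⟨w, b, hb, hwb, hw.le⟩

lemma summable_comp_fst {β ι : Type*} [Finite ι] {f : β → ℝ} (hf : Summable f) :
    Summable fun p : β × ι => f p.1 := by
  have := Fintype.ofFinite ι
  simpa using summable_mul_of_summable_norm hf.norm
    (Summable.of_finite : Summable fun _ : ι => ‖(1 : ℝ)‖)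

lemma exists_hasSum_of_forall_isDominatedSum {X ι 𝕜 : Type*} [Fintype ι] [Nonempty ι]
    [RCLike 𝕜] {P Q : (X → 𝕜) → Prop} {C : ℝ}
    (hdec : ∀ a, P a → ∃ (w : ι → 𝕜) (b : ι → X → 𝕜), (∀ i, Q (b i)) ∧
      IsDominatedSum w b a ∧ ∑ i, ‖w i‖ ≤ C)
    {l : Filter X} {f : X → 𝕜} {lam : ℕ → 𝕜} {a : ℕ → X → 𝕜} (hlam : Summable fun k => ‖lam k‖)
    (ha : ∀ k, P (a k)) (hf : ∀ᶠ x in l, HasSum (fun k => lam k * a k x) (f x)) :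
    ∃ (mu : ℕ → 𝕜) (b : ℕ → X → 𝕜), Summable (fun k => ‖mu k‖) ∧ (∀ k, Q (b k)) ∧
      (∀ᶠ x in l, HasSum (fun k => mu k * b k x) (f x)) ∧
      ∑' k, ‖mu k‖ ≤ C * ∑' k, ‖lam k‖ := by
  choose w b hQ hwb hC using fun k => hdec (a k) (ha k)
  obtain ⟨e⟩ : Nonempty (ℕ ≃ ℕ × ι) := inferInstance
  set g : ℕ × ι → 𝕜 := fun p => lam p.1 * w p.1 p.2
  have hw_le : ∀ k i, ‖w k i‖ ≤ C := fun k i =>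
    (Finset.single_le_sum (fun j _ => norm_nonneg (w k j)) (Finset.mem_univ i)).trans (hC k)
  have hg : Summable fun p => ‖g p‖ :=
    ((summable_comp_fst hlam).mul_left C).of_nonneg_of_le (fun _ => norm_nonneg _) fun p => by
      rw [norm_mul, mul_comm C]
      exact mul_le_mul_of_nonneg_left (hw_le _ _) (norm_nonneg _)
  refine ⟨g ∘ e, fun k => b (e k).1 (e k).2, (e.summable_iff (f := fun p => ‖g p‖)).2 hg,
    fun k => hQ _ _, ?_, ?_⟩
  · filter_upwards [hf] with x hx
    have hfib : ∀ k, HasSum (fun i => g (k, i) * b k i x) (lam k * a k x) := fun k => by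
      simpa only [g, mul_assoc, ← Finset.mul_sum, (hwb k).1 x] using
        hasSum_fintype fun i => g (k, i) * b k i x
    have hsum : Summable fun p : ℕ × ι => g p * b p.1 p.2 x :=
      Summable.of_norm_bounded (summable_comp_fst (summable_norm_iff.2 hx.summable)) fun p => by
        rw [mul_assoc, norm_mul, norm_mul (lam p.1) (a p.1 x)]
        exact mul_le_mul_of_nonneg_left ((hwb _).2 _ _) (norm_nonneg _)
    rw [← (hsum.hasSum.prod_fiberwise hfib).unique hx]
    exact (e.hasSum_iff (f := fun p => g p * b p.1 p.2 x)).2 hsum.hasSum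
  · have hfib : ∀ k, HasSum (fun i => ‖g (k, i)‖) (‖lam k‖ * ∑ i, ‖w k i‖) := fun k => by
      simpa only [g, norm_mul, ← Finset.mul_sum] using hasSum_fintype fun i => ‖g (k, i)‖
    rw [show (∑' k, ‖(g ∘ e) k‖) = ∑' p, ‖g p‖ from e.tsum_eq fun p => ‖g p‖]
    refine hasSum_le (fun k => ?_) (hg.hasSum.prod_fiberwise hfib) (hlam.hasSum.mul_left C)
    rw [mul_comm C]
    exact mul_le_mul_of_nonneg_left (hC k) (norm_nonneg _)

/-- If `f = Σ λ_k a_k` a.e. on `D` with `(λ_k) ∈ ℓ¹` and `T^{1,q}(γ)` `β`-atoms `a_k`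
(`β > 1`), then for every `α > 1` it also has a decomposition `f = Σ μ_k b_k` a.e. into
`T^{1,q}(γ)` `α`-atoms with `Σ|μ_k| ≤ C Σ|λ_k|`, `C` depending only on `α`, `β`, `q`, `n`. -/
theorem stmt14 (n : ℕ) (hn : 1 ≤ n) (q : ℝ) (hq : 1 < q)
    (β : ℝ) (hβ : 1 < β) (α : ℝ) (hα : 1 < α) :
    ∃ C : ℝ, 0 < C ∧
      ∀ f : E n × ℝ → ℂ, Measurable f →
        ∀ (lam : ℕ → ℂ) (a : ℕ → E n × ℝ → ℂ),
          Summable (fun k => ‖lam k‖) →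
          (∀ k, IsTAtom n q β (a k)) →
          (∀ᵐ p ∂(DMeasure n), HasSum (fun k => lam k * a k p) (f p)) →
          ∃ (mu : ℕ → ℂ) (b : ℕ → E n × ℝ → ℂ),
            Summable (fun k => ‖mu k‖) ∧
            (∀ k, IsTAtom n q α (b k)) ∧
            (∀ᵐ p ∂(DMeasure n), HasSum (fun k => mu k * b k p) (f p)) ∧
            ∑' k, ‖mu k‖ ≤ C * ∑' k, ‖lam k‖ := by
  obtain ⟨N, hN, C, hC, hdec⟩ := exists_isTAtom_dominatedSum hn hq.le hα (by linarith : 0 ≤ β)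
  have : Nonempty (Fin N) := ⟨⟨0, hN⟩⟩
  exact ⟨C, hC, fun f _ lam a hlam ha hf => exists_hasSum_of_forall_isDominatedSum hdec hlam ha hf⟩
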